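/- For all real α and β, every m ≥ 2, every 0 ≤ k ≤ ⌊m/2⌋, and every q ∈ {H,I}^{m−2k}: (i) |U_{k,q,s}| = binom(m, 2k) for every Dyck path s ∈ 𝔇_k; (ii) whenever s₁, s₂ ∈ 𝔇_k are distinct Dyck paths such that s₂ is obtained from s₁ by exchanging the positions of one U step and one D step (a transposition move), then for every x ∈ U_{k,q,s₁} there is exactly one y ∈ U_{k,q,s₂} with P(x,y) > 0, and the projection chain M̄_{k,q} of the restriction of M to T_{k,q}, taken with respect to the partition {U_{k,q,s} : s ∈ 𝔇_k}, satisfies P̄_{k,q}(s₁, s₂) = 1/(4m²); (iii) P̄_{k,q}(s₁, s₂) = 0 for all distinct s₁, s₂ not related by a transposition move, and the stationary distribution of M̄_{k,q} is uniform on 𝔇_k. -/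

import Mathlib

open Finset

/-- The four symbols of a 2-Motzkin path: up-step `U`, two colors of
horizontal steps `H` and `I`, and down-step `D`. -/
inductive MSym : Type
  | U | H | I | D
  deriving DecidableEq

instance : Fintype MSym :=
  ⟨{MSym.U, MSym.H, MSym.I, MSym.D}, fun x => by cases x <;> simp⟩

/-- `symCount x a` is `|x|_a`, the number of occurrences of the symbol `a` in `x`. -/
def symCount {m : ℕ} (x : Fin m → MSym) (a : MSym) : ℕ :=
  (Finset.univ.filter (fun i => x i = a)).card

/-- the number of occurrences of `a` among the first `j+1` symbols of `x`. -/
def symCountPrefix {m : ℕ} (x : Fin m → MSym) (a : MSym) (j : Fin m) : ℕ :=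
  (Finset.univ.filter (fun i => i ≤ j ∧ x i = a)).card

/-- `x` is a 2-Motzkin path: no prefix has more `D`s than `U`s, and the
total number of `U`s equals the total number of `D`s. -/
def IsMotzkin2 {m : ℕ} (x : Fin m → MSym) : Prop :=
  (∀ j : Fin m, symCountPrefix x MSym.D j ≤ symCountPrefix x MSym.U j) ∧
    symCount x MSym.U = symCount x MSym.D

instance {m : ℕ} : DecidablePred (IsMotzkin2 (m := m)) := fun _ => by
  unfold IsMotzkin2; infer_instance

/-- `𝔐²_m` : the set of 2-Motzkin paths of length `m`. -/
abbrev Motzkin2 (m : ℕ) : Type := {x : Fin m → MSym // IsMotzkin2 x}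

/-- The energy `E(x) = α(|x|_U + |x|_H + 1) + β |x|_I`. -/
noncomputable def energy (α β : ℝ) {m : ℕ} (x : Fin m → MSym) : ℝ :=
  α * ((symCount x MSym.U : ℝ) + (symCount x MSym.H : ℝ) + 1) + β * (symCount x MSym.I : ℝ)

/-- pairs of consecutive positions `(i, i+1)`. -/
def adjPairs (m : ℕ) : Finset (Fin m × Fin m) :=
  Finset.univ.filter (fun p => (p.2 : ℕ) = (p.1 : ℕ) + 1)

/-- The string `x` with the symbols `a`, `b` placed at positions `i`, `j`. -/
def setTwo {m : ℕ} (x : Fin m → MSym) (i j : Fin m) (a b : MSym) : Fin m → MSym :=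
  Function.update (Function.update x i a) j b

def isUD (a : MSym) : Prop := a = MSym.U ∨ a = MSym.D
def isHI (a : MSym) : Prop := a = MSym.H ∨ a = MSym.I
instance : DecidablePred isUD := fun a => by unfold isUD; infer_instance
instance : DecidablePred isHI := fun a => by unfold isHI; infer_instance

/-- The probability of moving from `x` to a *different* string `y` in one step
of the chain `M`: with probability 1/4 each, one of the four kinds of moves is
proposed (a uniformly random choice of positions together with the indicated
coin flips), and an (automatically valid) proposal `y ≠ x` is accepted with
probability 1/2. -/
noncomputable def stepWeight (α β : ℝ) {m : ℕ} (x y : Fin m → MSym) : ℝ :=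
  -- move 1 : UD ↔ HH at a random pair of consecutive positions
  (1/4) * (1/((m : ℝ) - 1)) * (1/2) *
    (∑ p ∈ adjPairs m,
      ((if x p.1 = MSym.U ∧ x p.2 = MSym.D ∧ y = setTwo x p.1 p.2 MSym.H MSym.H then
          Real.exp (-α) / (1 + Real.exp (-α)) else 0) +
       (if x p.1 = MSym.H ∧ x p.2 = MSym.H ∧ y = setTwo x p.1 p.2 MSym.U MSym.D then
          1 / (1 + Real.exp (-α)) else 0)))
  -- move 2 : H ↔ I at a random position
  + (1/4) * (1/(m : ℝ)) * (1/2) *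
    (∑ i : Fin m,
      ((if x i = MSym.I ∧ y = Function.update x i MSym.H then
          Real.exp (-α) / (Real.exp (-α) + Real.exp (-β)) else 0) +
       (if x i = MSym.H ∧ y = Function.update x i MSym.I then
          Real.exp (-β) / (Real.exp (-α) + Real.exp (-β)) else 0)))
  -- move 3 : swap the symbols at two uniform random positions, both in {U, D}
  + (1/4) * (1/((m : ℝ) * (m : ℝ))) * (1/2) *
    (∑ p : Fin m × Fin m,
      (if isUD (x p.1) ∧ isUD (x p.2) ∧ y = setTwo x p.1 p.2 (x p.2) (x p.1) then
        (1 : ℝ) else 0))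
  -- move 4 : reverse an adjacent pair consisting of one of {U,D} and one of {H,I}
  + (1/4) * (1/((m : ℝ) - 1)) * (1/2) *
    (∑ p ∈ adjPairs m,
      (if ((isUD (x p.1) ∧ isHI (x p.2)) ∨ (isHI (x p.1) ∧ isUD (x p.2))) ∧
          y = setTwo x p.1 p.2 (x p.2) (x p.1) then (1 : ℝ) else 0))

/-- The transition matrix of the Markov chain `M` on `𝔐²_m`: off the diagonal
the probability of the corresponding accepted move; proposals that are rejected,
invalid, or coincide with the current state contribute to the holding
probability on the diagonal. -/
noncomputable def transP (α β : ℝ) (m : ℕ) : Matrix (Motzkin2 m) (Motzkin2 m) ℝ :=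
  fun x y =>
    if x = y then
      1 - ∑ z : Motzkin2 m, (if z = x then 0 else stepWeight α β x.1 z.1)
    else stepWeight α β x.1 y.1

/-- The Gibbs distribution `π(x) = e^{-E(x)}/Z` on `𝔐²_m`. -/
noncomputable def gibbs (α β : ℝ) (m : ℕ) (x : Motzkin2 m) : ℝ :=
  Real.exp (-(energy α β x.1)) / ∑ y : Motzkin2 m, Real.exp (-(energy α β y.1))

/-- The spectral gap `1 - |λ₁|` of a transition matrix: one minus the largest
absolute value of an eigenvalue different from `λ₀ = 1`. -/
noncomputable def spectralGap {n : Type*} [Fintype n] [DecidableEq n]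
    (P : Matrix n n ℝ) : ℝ :=
  1 - sSup {r : ℝ | ∃ μ : ℂ,
    μ ∈ spectrum ℂ (P.map (fun t => (t : ℂ))) ∧ μ ≠ 1 ∧ r = ‖μ‖}

/-- The subsequence of `H` and `I` symbols of `x`, encoded as a list of
Booleans with `H ↦ true` and `I ↦ false`. -/
def hiList {m : ℕ} (x : Fin m → MSym) : List Bool :=
  (List.ofFn x).filterMap (fun a =>
    match a with
    | MSym.H => some true
    | MSym.I => some false
    | _ => none)

/-- The skeleton `σ(x)` of `x`: the subsequence of `U` and `D` symbols of `x`,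
encoded as a list of Booleans with `U ↦ true` and `D ↦ false`. -/
def udList {m : ℕ} (x : Fin m → MSym) : List Bool :=
  (List.ofFn x).filterMap (fun a =>
    match a with
    | MSym.U => some true
    | MSym.D => some false
    | _ => none)

/-- A Dyck word (encoded with `U ↦ true`, `D ↦ false`): every prefix has at
least as many `U`s as `D`s, and in total there are as many `U`s as `D`s. -/
def IsDyck {n : ℕ} (s : Fin n → Bool) : Prop :=
  (∀ j : Fin n, (Finset.univ.filter (fun i => i ≤ j ∧ s i = false)).card ≤
      (Finset.univ.filter (fun i => i ≤ j ∧ s i = true)).card) ∧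
    (Finset.univ.filter (fun i => s i = true)).card =
      (Finset.univ.filter (fun i => s i = false)).card

instance {n : ℕ} : DecidablePred (IsDyck (n := n)) := fun _ => by
  unfold IsDyck; infer_instance

/-- `𝔇_k` : the set of Dyck paths with `k` up-steps. -/
abbrev Dyck (k : ℕ) : Type := {s : Fin (2 * k) → Bool // IsDyck s}

/-- The states of `T_{k,q}`, as a type: 2-Motzkin paths of length `m` with
`|x|_U = k` whose subsequence of `H` and `I` symbols is `q`. -/
abbrev TkqType (m k : ℕ) (q : Fin (m - 2 * k) → Bool) : Type :=
  {x : Motzkin2 m // symCount x.1 MSym.U = k ∧ hiList x.1 = List.ofFn q}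

/-- The restriction chain `M_{k,q}` of `M` to `T_{k,q}`. -/
noncomputable def restPkq (α β : ℝ) (m k : ℕ) (q : Fin (m - 2 * k) → Bool) :
    Matrix (TkqType m k q) (TkqType m k q) ℝ :=
  fun x y =>
    if x = y then 1 - ∑ z : TkqType m k q, (if z = x then 0 else transP α β m x.1 z.1)
    else transP α β m x.1 y.1

/-- The stationary distribution `π_{k,q}(x) = π(x)/π(T_{k,q})` of `M_{k,q}`. -/
noncomputable def gibbsKQ (α β : ℝ) (m k : ℕ) (q : Fin (m - 2 * k) → Bool)
    (x : TkqType m k q) : ℝ :=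
  gibbs α β m x.1 / ∑ y : TkqType m k q, gibbs α β m y.1

/-- `U_{k,q,s} = {x ∈ T_{k,q} : σ(x) = s}`. -/
def Uset (m k : ℕ) (q : Fin (m - 2 * k) → Bool) (s : Dyck k) :
    Finset (TkqType m k q) :=
  Finset.univ.filter (fun x => udList x.1.1 = List.ofFn s.1)

/-- The projection chain `M̄_{k,q}` of `M_{k,q}` with respect to the partition
of `T_{k,q}` into the sets `U_{k,q,s}`, `s ∈ 𝔇_k`. -/
noncomputable def projPkq (α β : ℝ) (m k : ℕ) (q : Fin (m - 2 * k) → Bool) :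
    Matrix (Dyck k) (Dyck k) ℝ :=
  fun s1 s2 =>
    (1 / ∑ x ∈ Uset m k q s1, gibbsKQ α β m k q x) *
      ∑ x ∈ Uset m k q s1, ∑ y ∈ Uset m k q s2,
        gibbsKQ α β m k q x * restPkq α β m k q x y


/-- `s2` is obtained from the Dyck path `s1` by a transposition move:
exchanging the positions of one `U` step and one `D` step. -/
def TranspMove {k : ℕ} (s1 s2 : Dyck k) : Prop :=
  ∃ i j : Fin (2 * k), s1.1 i = true ∧ s1.1 j = false ∧
    s2.1 = Function.update (Function.update s1.1 i false) j true

/-!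
On `T_{k,q}` the energy is constant, so the restricted Gibbs measure is uniform. A path in
`U_{k,q,s}` is determined by the set of positions of its `U`/`D` steps, and every `2k`-subset of
the `m` positions occurs (fill it with `s`, the rest with `q`); hence `|U_{k,q,s}| = binom(m, 2k)`
and `|T_{k,q}| = |𝔇_k| binom(m, 2k)`, which makes the projected stationary law uniform.

Between different skeletons only move 3 acts. If `e` enumerates the `U`/`D` positions of `x`,
exchanging `x (e a)` and `x (e b)` keeps these positions and transposes the skeleton at `a, b`.
So for a transposition move `s₁ → s₂` each `x ∈ U_{k,q,s₁}` reaches exactly one `y ∈ U_{k,q,s₂}`,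
through the two ordered pairs of positions, with probability `2 · (1/4)(1/m²)(1/2) = 1/(4m²)`;
every row of the block `U_{k,q,s₁} × U_{k,q,s₂}` then sums to `1/(4m²)`, and so does `P̄`.
-/

namespace List

variable {α β : Type*}

theorem forall_take_iff_forall_take_succ {l : List α} {P : List α → Prop} (hnil : P []) :
    (∀ n, P (l.take n)) ↔ ∀ j < l.length, P (l.take (j + 1)) := by
  refine ⟨fun h j _ => h (j + 1), fun h n => ?_⟩
  rw [take_eq_take_min]
  rcases hmin : min n l.length with _ | j
  · simpa using hnil
  · exact h j (by omega)

theorem exists_take_filterMap_eq_filterMap_take (g : α → Option β) (l : List α) (n : ℕ) :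
    ∃ p, (l.filterMap g).take n = (l.take p).filterMap g := by
  induction l generalizing n with
  | nil => exact ⟨0, by simp⟩
  | cons a t ih =>
    cases h : g a with
    | none =>
      obtain ⟨p, hp⟩ := ih n
      exact ⟨p + 1, by simp [h, hp]⟩
    | some b =>
      cases n with
      | zero => exact ⟨0, by simp⟩
      | succ n =>
        obtain ⟨p, hp⟩ := ih n
        exact ⟨p + 1, by simp [h, hp]⟩

theorem exists_filterMap_take_eq_take_filterMap (g : α → Option β) (l : List α) (p : ℕ) :
    ∃ n, (l.take p).filterMap g = (l.filterMap g).take n := by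
  induction l generalizing p with
  | nil => exact ⟨0, by simp⟩
  | cons a t ih =>
    cases p with
    | zero => exact ⟨0, by simp⟩
    | succ p =>
      obtain ⟨n, hn⟩ := ih p
      cases h : g a with
      | none => exact ⟨n, by simp [h, hn]⟩
      | some b => exact ⟨n + 1, by simp [h, hn]⟩

theorem forall_take_filterMap_iff (g : α → Option β) (l : List α) (P : List β → Prop) :
    (∀ n, P ((l.filterMap g).take n)) ↔ ∀ p, P ((l.take p).filterMap g) := by
  refine ⟨fun h p => ?_, fun h n => ?_⟩
  · obtain ⟨n, hn⟩ := exists_filterMap_take_eq_take_filterMap g l p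
    exact hn ▸ h n
  · obtain ⟨p, hp⟩ := exists_take_filterMap_eq_filterMap_take g l n
    exact hp ▸ h p

theorem count_filterMap_of_iff [BEq β] [LawfulBEq β] [DecidableEq α] {g : α → Option β}
    {b : β} {a : α} (h : ∀ c, g c = some b ↔ c = a) (l : List α) :
    (l.filterMap g).count b = l.count a := by
  rw [count_filterMap, count_eq_countP]
  exact countP_congr fun c _ => by simp [h]

theorem filterMap_set_set_succ {g : α → Option β} {l : List α} {i : ℕ}
    (hi : i + 1 < l.length) (hnone : g l[i] = none ∨ g l[i + 1] = none) :
    ((l.set i l[i + 1]).set (i + 1) l[i]).filterMap g = l.filterMap g := by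
  induction l generalizing i with
  | nil => simp at hi
  | cons a t ih =>
    cases i with
    | zero =>
      obtain _ | ⟨b, t⟩ := t
      · simp at hi
      · rcases hnone with h | h <;> cases hb : g b <;> cases ha : g a <;>
          simp_all
    | succ i =>
      have := ih (i := i) (by simpa using hi) hnone
      simp only [getElem_cons_succ, set_cons_succ] at this ⊢
      rw [filterMap_cons, filterMap_cons, this]

section OfFn

variable {m : ℕ}

theorem ofFn_update [DecidableEq α] (f : Fin m → α) (i : Fin m) (a : α) :
    ofFn (Function.update f i a) = (ofFn f).set i a := by
  refine ext_getElem (by simp) fun n h₁ _ => ?_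
  simp [getElem_set, Function.update_apply, Fin.ext_iff, eq_comm]

theorem filterMap_ofFn_congr {g : α → Option β} {f f' : Fin m → α}
    (h : ∀ i, g (f i) = g (f' i)) : (ofFn f).filterMap g = (ofFn f').filterMap g := by
  have := congrArg (filterMap id) (congrArg ofFn (funext h) : ofFn (g ∘ f) = ofFn (g ∘ f'))
  simpa [← map_ofFn] using this

theorem exists_ofFn_eq (l : List α) (h : l.length = m) : ∃ f : Fin m → α, ofFn f = l := by
  subst h
  exact ⟨_, ofFn_getElem⟩

theorem countP_ofFn (f : Fin m → α) (p : α → Bool) :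
    (ofFn f).countP p = #{i | p (f i)} := by
  simp [Fin.univ_def, Finset.filter, Multiset.filter_coe, countP_eq_length_filter,
    ofFn_eq_map, filter_map, Function.comp_def]

theorem count_ofFn [DecidableEq α] (f : Fin m → α) (a : α) :
    (ofFn f).count a = #{i | f i = a} := by
  simp [count_eq_countP, countP_ofFn]

theorem count_take_ofFn [DecidableEq α] (f : Fin m → α) (a : α) (n : ℕ) :
    ((ofFn f).take n).count a = #{i : Fin m | (i : ℕ) < n ∧ f i = a} := by
  obtain h | h := le_total n m
  · rw [← Fin.ofFn_take_eq_take_ofFn h, count_ofFn]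
    refine Finset.card_bij (fun i _ => Fin.castLE h i) (fun i hi => ?_) (fun i _ j _ hij => ?_)
      fun j hj => ?_
    · simp only [Finset.mem_filter, Finset.mem_univ, true_and] at hi ⊢
      exact ⟨i.isLt, hi⟩
    · simpa [Fin.ext_iff] using hij
    · simp only [Finset.mem_filter, Finset.mem_univ, true_and] at hj
      exact ⟨⟨j, hj.1⟩, Finset.mem_filter.mpr ⟨Finset.mem_univ _, hj.2⟩, rfl⟩
  · rw [take_of_length_le (by simpa), count_ofFn]
    congr 1
    ext i
    simp [lt_of_lt_of_le i.isLt h]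

end OfFn

end List

namespace MSym

def udBit : MSym → Option Bool
  | U => some true
  | D => some false
  | _ => none

def hiBit : MSym → Option Bool
  | H => some true
  | I => some false
  | _ => none

theorem udBit_eq_some_true_iff (a : MSym) : a.udBit = some true ↔ a = U := by
  cases a <;> decide

theorem udBit_eq_some_false_iff (a : MSym) : a.udBit = some false ↔ a = D := by
  cases a <;> decide

theorem hiBit_eq_some_true_iff (a : MSym) : a.hiBit = some true ↔ a = H := by
  cases a <;> decide

theorem hiBit_eq_some_false_iff (a : MSym) : a.hiBit = some false ↔ a = I := by
  cases a <;> decide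

theorem isSome_udBit_iff (a : MSym) : a.udBit.isSome ↔ isUD a := by
  cases a <;> decide

theorem udBit_eq_none_of_isHI {a : MSym} (h : isHI a) : a.udBit = none := by
  cases a <;> simp_all [isHI, udBit]

theorem hiBit_eq_none_of_isUD {a : MSym} (h : isUD a) : a.hiBit = none := by
  cases a <;> simp_all [isUD, hiBit]

end MSym

section Skeleton

variable {m : ℕ}

theorem udList_eq_filterMap (x : Fin m → MSym) :
    udList x = (List.ofFn x).filterMap MSym.udBit := rfl

theorem hiList_eq_filterMap (x : Fin m → MSym) :
    hiList x = (List.ofFn x).filterMap MSym.hiBit := rfl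

theorem udList_congr {x y : Fin m → MSym} (h : ∀ i, (x i).udBit = (y i).udBit) :
    udList x = udList y :=
  List.filterMap_ofFn_congr h

theorem hiList_congr {x y : Fin m → MSym} (h : ∀ i, (x i).hiBit = (y i).hiBit) :
    hiList x = hiList y :=
  List.filterMap_ofFn_congr h

theorem symCount_eq_count (x : Fin m → MSym) (a : MSym) :
    symCount x a = (List.ofFn x).count a :=
  (List.count_ofFn x a).symm

theorem count_true_udList (x : Fin m → MSym) : (udList x).count true = symCount x MSym.U := by
  rw [udList_eq_filterMap, List.count_filterMap_of_iff MSym.udBit_eq_some_true_iff,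
    symCount_eq_count]

theorem count_false_udList (x : Fin m → MSym) : (udList x).count false = symCount x MSym.D := by
  rw [udList_eq_filterMap, List.count_filterMap_of_iff MSym.udBit_eq_some_false_iff,
    symCount_eq_count]

theorem count_true_hiList (x : Fin m → MSym) : (hiList x).count true = symCount x MSym.H := by
  rw [hiList_eq_filterMap, List.count_filterMap_of_iff MSym.hiBit_eq_some_true_iff,
    symCount_eq_count]

theorem count_false_hiList (x : Fin m → MSym) : (hiList x).count false = symCount x MSym.I := by
  rw [hiList_eq_filterMap, List.count_filterMap_of_iff MSym.hiBit_eq_some_false_iff,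
    symCount_eq_count]

theorem length_udList (x : Fin m → MSym) : (udList x).length = #{i | isUD (x i)} := by
  rw [udList_eq_filterMap, List.length_filterMap_eq_countP, List.countP_ofFn]
  simp [MSym.isSome_udBit_iff]

end Skeleton

section Dyck

def IsDyckList (l : List Bool) : Prop :=
  (∀ n, (l.take n).count false ≤ (l.take n).count true) ∧ l.count true = l.count false

theorem forall_card_prefix_le_iff {α : Type*} [DecidableEq α] {m : ℕ} (x : Fin m → α) (u d : α) :
    (∀ j : Fin m, #{i | i ≤ j ∧ x i = d} ≤ #{i | i ≤ j ∧ x i = u}) ↔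
      ∀ n, ((List.ofFn x).take n).count d ≤ ((List.ofFn x).take n).count u := by
  have hprefix (j : Fin m) (a : α) :
      #{i | i ≤ j ∧ x i = a} = ((List.ofFn x).take (j + 1)).count a := by
    rw [List.count_take_ofFn]
    refine congrArg Finset.card (Finset.filter_congr fun i _ => ?_)
    rw [Fin.le_def, Nat.lt_succ_iff]
  rw [List.forall_take_iff_forall_take_succ (P := fun l => l.count d ≤ l.count u) (by simp)]
  simp only [List.length_ofFn, hprefix]
  exact ⟨fun h j hj => h ⟨j, hj⟩, fun h j => h j j.isLt⟩

theorem isDyck_iff_isDyckList {n : ℕ} (s : Fin n → Bool) :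
    IsDyck s ↔ IsDyckList (List.ofFn s) := by
  rw [IsDyck, IsDyckList, forall_card_prefix_le_iff, List.count_ofFn, List.count_ofFn]

theorem isMotzkin2_iff_isDyckList {m : ℕ} (x : Fin m → MSym) :
    IsMotzkin2 x ↔ IsDyckList (udList x) := by
  rw [IsMotzkin2, IsDyckList, count_true_udList, count_false_udList, udList_eq_filterMap,
    List.forall_take_filterMap_iff _ _ fun l => l.count false ≤ l.count true]
  simp only [List.count_filterMap_of_iff MSym.udBit_eq_some_true_iff,
    List.count_filterMap_of_iff MSym.udBit_eq_some_false_iff]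
  rw [← forall_card_prefix_le_iff]
  rfl

theorem isMotzkin2_iff_isDyck {m n : ℕ} {x : Fin m → MSym} {s : Fin n → Bool}
    (h : udList x = List.ofFn s) : IsMotzkin2 x ↔ IsDyck s := by
  rw [isMotzkin2_iff_isDyckList, isDyck_iff_isDyckList, h]

theorem count_true_ofFn_dyck {k : ℕ} (s : Dyck k) : (List.ofFn s.1).count true = k := by
  have hbal := ((isDyck_iff_isDyckList s.1).mp s.2).2
  have hlen := List.count_true_add_count_false (List.ofFn s.1)
  rw [List.length_ofFn] at hlen
  omega

end Dyck

section Weave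

/-- The letters of `u` go to the `true` entries of the mask `w`, those of `h` to the `false`
entries; once a word runs out, `headI` silently supplies `D` resp. `I`. -/
def weave : List Bool → List Bool → List Bool → List MSym
  | [], _, _ => []
  | true :: w, u, h => (if u.headI then MSym.U else MSym.D) :: weave w u.tail h
  | false :: w, u, h => (if h.headI then MSym.H else MSym.I) :: weave w u h.tail

theorem weave_self (l : List MSym) :
    weave (l.map fun a => decide (isUD a)) (l.filterMap MSym.udBit)
      (l.filterMap MSym.hiBit) = l := by
  induction l with
  | nil => rfl
  | cons a t ih => cases a <;> simpa [weave, isUD, MSym.udBit, MSym.hiBit]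

theorem length_weave (w u h : List Bool) : (weave w u h).length = w.length := by
  induction w generalizing u h with
  | nil => rfl
  | cons b w ih => cases b <;> simp [weave, ih]

theorem map_weave (w u h : List Bool) :
    (weave w u h).map (fun a => decide (isUD a)) = w := by
  induction w generalizing u h with
  | nil => rfl
  | cons b w ih => cases b <;> simp only [weave, List.map_cons, ih] <;> split_ifs <;> simp [isUD]

theorem filterMap_udBit_weave {w u : List Bool} (h : List Bool)
    (hu : w.count true = u.length) : (weave w u h).filterMap MSym.udBit = u := by
  induction w generalizing u h with
  | nil => simpa [weave, eq_comm] using hu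
  | cons b w ih =>
    cases b
    · have := ih h.tail (by simpa using hu)
      simp only [weave]
      split_ifs <;> simpa [List.filterMap_cons, MSym.udBit] using this
    · obtain _ | ⟨c, u⟩ := u
      · simp at hu
      · cases c <;> simpa [weave, MSym.udBit] using ih h (by simpa using hu)

theorem filterMap_hiBit_weave {w h : List Bool} (u : List Bool)
    (hh : w.count false = h.length) : (weave w u h).filterMap MSym.hiBit = h := by
  induction w generalizing u h with
  | nil => simpa [weave, eq_comm] using hh
  | cons b w ih =>
    cases b
    · obtain _ | ⟨c, h⟩ := h
      · simp at hh
      · cases c <;> simpa [weave, MSym.hiBit] using ih u (by simpa using hh)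
    · have := ih u.tail (by simpa using hh)
      simp only [weave]
      split_ifs <;> simpa [List.filterMap_cons, MSym.hiBit] using this

variable {m : ℕ}

theorem eq_of_udList_eq_of_hiList_eq {x y : Fin m → MSym} (hmask : ∀ i, isUD (x i) ↔ isUD (y i))
    (hud : udList x = udList y) (hhi : hiList x = hiList y) : x = y := by
  have hmap : (List.ofFn x).map (fun a => decide (isUD a)) =
      (List.ofFn y).map (fun a => decide (isUD a)) := by
    simp [List.map_ofFn, Function.comp_def, hmask]
  rw [← List.ofFn_inj, ← weave_self (List.ofFn x), ← weave_self (List.ofFn y), hmap]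
  exact congrArg₂ _ hud hhi

theorem exists_udList_hiList_eq (A : Finset (Fin m)) {u h : List Bool} (hu : u.length = #A)
    (hh : #A + h.length = m) :
    ∃ x : Fin m → MSym, (∀ i, isUD (x i) ↔ i ∈ A) ∧ udList x = u ∧ hiList x = h := by
  set w := List.ofFn fun i : Fin m => decide (i ∈ A)
  have hwt : w.count true = u.length := by
    simp [w, List.count_ofFn, hu]
  have hwf : w.count false = h.length := by
    have := List.count_true_add_count_false w
    rw [List.length_ofFn] at this
    omega
  obtain ⟨x, hx⟩ := List.exists_ofFn_eq (weave w u h) (by rw [length_weave, List.length_ofFn])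
  refine ⟨x, fun i => ?_, ?_, ?_⟩
  · have hmask := congrArg (List.map fun a => decide (isUD a)) hx
    rw [map_weave, List.map_ofFn, List.ofFn_inj] at hmask
    simpa using congrFun hmask i
  · rw [udList_eq_filterMap, hx, filterMap_udBit_weave _ hwt]
  · rw [hiList_eq_filterMap, hx, filterMap_hiBit_weave _ hwf]

end Weave

section Partition

variable {m k : ℕ} {q : Fin (m - 2 * k) → Bool}

theorem mem_Uset {s : Dyck k} {x : TkqType m k q} :
    x ∈ Uset m k q s ↔ udList x.1.1 = List.ofFn s.1 := by
  simp [Uset]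

theorem exists_mem_Uset_val_eq {s : Dyck k} {x : Fin m → MSym} (hud : udList x = List.ofFn s.1)
    (hhi : hiList x = List.ofFn q) : ∃ y ∈ Uset m k q s, y.1.1 = x := by
  have hU : symCount x MSym.U = k := by rw [← count_true_udList, hud, count_true_ofFn_dyck]
  exact ⟨⟨⟨x, (isMotzkin2_iff_isDyck hud).mpr s.2⟩, hU, hhi⟩, mem_Uset.mpr hud, rfl⟩

theorem card_Uset (s : Dyck k) : #(Uset m k q s) = m.choose (2 * k) := by
  rw [show m.choose (2 * k) = #((Finset.univ : Finset (Fin m)).powersetCard (2 * k)) by simp]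
  refine Finset.card_bij (fun x _ => Finset.univ.filter fun i => isUD (x.1.1 i)) (fun x hx => ?_)
    (fun x hx y hy hxy => ?_) (fun A hA => ?_)
  · rw [Finset.mem_powersetCard, ← length_udList, mem_Uset.mp hx, List.length_ofFn]
    exact ⟨Finset.subset_univ _, rfl⟩
  · refine Subtype.ext (Subtype.ext (eq_of_udList_eq_of_hiList_eq (fun i => ?_) ?_ ?_))
    · simpa using Finset.ext_iff.mp hxy i
    · rw [mem_Uset.mp hx, mem_Uset.mp hy]
    · rw [x.2.2, y.2.2]
  · rw [Finset.mem_powersetCard] at hA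
    have hAm : #A ≤ m := by simpa using Finset.card_le_card hA.1
    obtain ⟨x, hmask, hud, hhi⟩ := exists_udList_hiList_eq A (u := List.ofFn s.1)
      (h := List.ofFn q) (by simp [hA.2]) (by simp only [List.length_ofFn]; omega)
    obtain ⟨y, hy, rfl⟩ := exists_mem_Uset_val_eq hud hhi
    exact ⟨y, hy, by ext i; simp [hmask]⟩

theorem exists_mem_Uset (x : TkqType m k q) : ∃ s, x ∈ Uset m k q s := by
  have hlen : (udList x.1.1).length = 2 * k := by
    rw [← List.count_true_add_count_false, count_true_udList, count_false_udList, ← x.1.2.2,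
      x.2.1, two_mul]
  obtain ⟨s, hs⟩ := List.exists_ofFn_eq _ hlen
  exact ⟨⟨s, (isMotzkin2_iff_isDyck hs.symm).mp x.1.2⟩, mem_Uset.mpr hs.symm⟩

theorem card_TkqType :
    Fintype.card (TkqType m k q) = Fintype.card (Dyck k) * m.choose (2 * k) := by
  have hcover : (Finset.univ : Finset (TkqType m k q)) = Finset.univ.biUnion (Uset m k q) := by
    ext x
    simpa using exists_mem_Uset x
  rw [← Finset.card_univ, hcover, Finset.card_biUnion]
  · simp [card_Uset]
  · intro s _ t _ hst
    refine Finset.disjoint_left.mpr fun x hs ht => hst (Subtype.ext ?_)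
    rw [mem_Uset] at hs ht
    exact List.ofFn_injective (hs.symm.trans ht)

end Partition

section Stationary

variable (α β : ℝ) {m k : ℕ} {q : Fin (m - 2 * k) → Bool}

theorem energy_eq_of_tkq (x : TkqType m k q) :
    energy α β x.1.1 = α * (k + (List.ofFn q).count true + 1) + β * (List.ofFn q).count false := by
  rw [energy, x.2.1, ← count_true_hiList, ← count_false_hiList, x.2.2]

theorem gibbsKQ_eq_inv_card (x : TkqType m k q) :
    gibbsKQ α β m k q x = (Fintype.card (TkqType m k q) : ℝ)⁻¹ := by
  have hconst (y : TkqType m k q) : gibbs α β m y.1 = gibbs α β m x.1 := by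
    simp only [gibbs, energy_eq_of_tkq]
  have hpos : 0 < gibbs α β m x.1 :=
    div_pos (Real.exp_pos _)
      (Finset.sum_pos (fun _ _ => Real.exp_pos _) ⟨x.1, Finset.mem_univ _⟩)
  rw [gibbsKQ, Finset.sum_congr rfl fun y _ => hconst y, Finset.sum_const, Finset.card_univ,
    nsmul_eq_mul]
  field_simp

theorem sum_gibbsKQ_Uset (hk : 2 * k ≤ m) (s : Dyck k) :
    ∑ x ∈ Uset m k q s, gibbsKQ α β m k q x = 1 / (Fintype.card (Dyck k) : ℝ) := by
  have hC : (m.choose (2 * k) : ℝ) ≠ 0 := by exact_mod_cast (Nat.choose_pos hk).ne'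
  rw [Finset.sum_congr rfl fun x _ => gibbsKQ_eq_inv_card α β x, Finset.sum_const, card_Uset,
    card_TkqType, nsmul_eq_mul]
  push_cast
  field_simp

end Stationary

section Transitions

variable {m : ℕ}

/-- The index set of the move-3 sum in `stepWeight`. -/
def swapPairs (x y : Fin m → MSym) : Finset (Fin m × Fin m) :=
  {p | isUD (x p.1) ∧ isUD (x p.2) ∧ y = setTwo x p.1 p.2 (x p.2) (x p.1)}

theorem setTwo_eq_comp_swap (x : Fin m → MSym) (i j : Fin m) :
    setTwo x i j (x j) (x i) = x ∘ Equiv.swap i j := by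
  obtain rfl | hij := eq_or_ne i j
  · simp [setTwo]
  · rw [Equiv.comp_swap_eq_update, setTwo, Function.update_comm hij]

theorem apply_comp_swap_eq {ι γ δ : Type*} [DecidableEq ι] (f : γ → δ) {x : ι → γ} {a b : ι}
    (h : f (x a) = f (x b)) (t : ι) : f (x (Equiv.swap a b t)) = f (x t) := by
  rw [Equiv.swap_apply_def]
  split_ifs with hta htb
  · rw [hta, h]
  · rw [htb, h]
  · rfl

theorem symCount_update (x : Fin m → MSym) (i : Fin m) (a b : MSym) :
    symCount (Function.update x i a) b + (if x i = b then 1 else 0)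
      = symCount x b + (if a = b then 1 else 0) := by
  simp only [symCount, Finset.card_filter]
  rw [← Finset.add_sum_erase _ _ (Finset.mem_univ i),
    ← Finset.add_sum_erase _ _ (Finset.mem_univ i), Function.update_self,
    Finset.sum_congr rfl fun t ht => by rw [Function.update_of_ne (Finset.ne_of_mem_erase ht)]]
  ring

theorem symCount_setTwo (x : Fin m → MSym) {i j : Fin m} (hij : i ≠ j) (a b c : MSym) :
    symCount (setTwo x i j a b) c + (if x i = c then 1 else 0) + (if x j = c then 1 else 0)
      = symCount x c + (if a = c then 1 else 0) + (if b = c then 1 else 0) := by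
  have h₁ := symCount_update x i a c
  have h₂ := symCount_update (Function.update x i a) j b c
  rw [Function.update_of_ne hij.symm] at h₂
  rw [setTwo]
  omega

theorem udList_update_of_isHI {x : Fin m → MSym} {i : Fin m} {a : MSym} (hi : isHI (x i))
    (ha : isHI a) : udList (Function.update x i a) = udList x := by
  refine udList_congr fun t => ?_
  obtain rfl | hti := eq_or_ne t i
  · rw [Function.update_self, MSym.udBit_eq_none_of_isHI ha, MSym.udBit_eq_none_of_isHI hi]
  · rw [Function.update_of_ne hti]

theorem udList_setTwo_swap_adjacent {x : Fin m → MSym} {i j : Fin m} (hij : (j : ℕ) = i + 1)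
    (h : isHI (x i) ∨ isHI (x j)) : udList (setTwo x i j (x j) (x i)) = udList x := by
  have hlen : (i : ℕ) + 1 < (List.ofFn x).length := by simp [← hij]
  have hj : j = ⟨i + 1, by simpa using hlen⟩ := Fin.ext hij
  have hnone := h.imp MSym.udBit_eq_none_of_isHI MSym.udBit_eq_none_of_isHI
  subst hj
  rw [udList_eq_filterMap, udList_eq_filterMap, setTwo, List.ofFn_update, List.ofFn_update]
  simpa using List.filterMap_set_set_succ (g := MSym.udBit) hlen (by simpa using hnone)

theorem mem_adjPairs {p : Fin m × Fin m} : p ∈ adjPairs m ↔ (p.2 : ℕ) = p.1 + 1 := by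
  simp [adjPairs]

/-- Moves of type 1 change the number of `U`s and moves of types 2 and 4 keep the skeleton,
so between strings with equal `U`-counts and different skeletons only move 3 contributes. -/
theorem stepWeight_eq_card_swapPairs (α β : ℝ) {x y : Fin m → MSym}
    (hU : symCount x MSym.U = symCount y MSym.U) (hud : udList x ≠ udList y) :
    stepWeight α β x y = #(swapPairs x y) / (8 * m ^ 2) := by
  simp only [stepWeight]
  rw [Finset.sum_eq_zero (s := adjPairs m) ?move1, Finset.sum_eq_zero (s := adjPairs m) ?move4,
    Finset.sum_eq_zero (s := (Finset.univ : Finset (Fin m))) ?move2, Finset.sum_boole]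
  · simp only [swapPairs]
    ring
  case move1 =>
    intro p hp
    have hne : p.1 ≠ p.2 := fun h => by simp [mem_adjPairs, h] at hp
    rw [if_neg, if_neg, add_zero]
    · rintro ⟨h₁, h₂, rfl⟩
      have := symCount_setTwo x hne MSym.U MSym.D MSym.U
      simp [h₁, h₂] at this
      omega
    · rintro ⟨h₁, h₂, rfl⟩
      have := symCount_setTwo x hne MSym.H MSym.H MSym.U
      simp [h₁, h₂] at this
      omega
  case move2 =>
    intro i _
    rw [if_neg, if_neg, add_zero]
    · rintro ⟨hi, rfl⟩
      exact hud (udList_update_of_isHI (Or.inl hi) (Or.inr rfl)).symm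
    · rintro ⟨hi, rfl⟩
      exact hud (udList_update_of_isHI (Or.inr hi) (Or.inl rfl)).symm
  case move4 =>
    intro p hp
    exact if_neg fun ⟨hHI, hy⟩ => hud (hy ▸ (udList_setTwo_swap_adjacent (mem_adjPairs.mp hp)
      (hHI.symm.imp (·.1) (·.2))).symm)

end Transitions

section SkeletonPositions

variable {m n : ℕ} {x : Fin m → MSym}

def udPos (x : Fin m → MSym) : List (Fin m) :=
  (List.finRange m).filter fun t => isUD (x t)

theorem udList_eq_map_udPos (x : Fin m → MSym) :
    udList x = (udPos x).map fun t => decide (x t = MSym.U) := by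
  rw [udList_eq_filterMap, List.ofFn_eq_map, List.filterMap_map, udPos,
    ← List.filterMap_eq_filter, List.map_filterMap]
  refine List.filterMap_congr fun t _ => ?_
  cases h : x t <;> simp [h, MSym.udBit, isUD, Option.guard]

theorem udPos_congr {y : Fin m → MSym} (h : ∀ t, isUD (x t) ↔ isUD (y t)) : udPos x = udPos y :=
  List.filter_congr fun t _ => by simp [h]

variable {e : Fin n → Fin m}

theorem exists_ofFn_eq_udPos {s : Fin n → Bool} (hx : udList x = List.ofFn s) :
    ∃ e : Fin n → Fin m, List.ofFn e = udPos x :=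
  List.exists_ofFn_eq _ (by simpa [udList_eq_map_udPos] using congrArg List.length hx)

theorem injective_of_ofFn_eq_udPos (he : List.ofFn e = udPos x) : Function.Injective e :=
  List.nodup_ofFn.mp (he ▸ (List.nodup_finRange m).filter _)

theorem isUD_iff_mem_range (he : List.ofFn e = udPos x) (t : Fin m) :
    isUD (x t) ↔ t ∈ Set.range e := by
  rw [← List.mem_ofFn', he, udPos, List.mem_filter]
  simp

theorem udList_eq_ofFn_of_udPos (he : List.ofFn e = udPos x) :
    udList x = List.ofFn fun a => decide (x (e a) = MSym.U) := by
  rw [udList_eq_map_udPos, ← he, List.map_ofFn]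
  rfl

theorem eq_of_udList_eq_ofFn (he : List.ofFn e = udPos x) {s : Fin n → Bool}
    (hx : udList x = List.ofFn s) : s = fun a => decide (x (e a) = MSym.U) :=
  List.ofFn_injective (hx.symm.trans (udList_eq_ofFn_of_udPos he))

theorem udList_comp_swap (he : List.ofFn e = udPos x) (a b : Fin n) :
    udList (x ∘ Equiv.swap (e a) (e b)) =
      List.ofFn fun c => decide (x (e (Equiv.swap a b c)) = MSym.U) := by
  have hUD (c : Fin n) : isUD (x (e c)) := (isUD_iff_mem_range he _).mpr ⟨c, rfl⟩
  have hmask (t : Fin m) : isUD (x (Equiv.swap (e a) (e b) t)) ↔ isUD (x t) :=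
    Iff.of_eq (apply_comp_swap_eq isUD (propext (iff_of_true (hUD a) (hUD b))) t)
  rw [udList_eq_ofFn_of_udPos (x := x ∘ Equiv.swap (e a) (e b))
    (he.trans (udPos_congr fun t => (hmask t).symm))]
  simp [(injective_of_ofFn_eq_udPos he).swap_apply]

end SkeletonPositions

section TranspositionMoves

variable {k : ℕ} {s1 s2 : Dyck k}

theorem transpMove_iff :
    TranspMove s1 s2 ↔
      ∃ a b, s1.1 a = true ∧ s1.1 b = false ∧ s2.1 = s1.1 ∘ Equiv.swap a b := by
  refine exists₂_congr fun a b => and_congr_right fun ha => and_congr_right fun hb => ?_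
  have hab : a ≠ b := fun h => by simp [h, hb] at ha
  rw [Equiv.comp_swap_eq_update, ha, hb, Function.update_comm hab]

theorem transpMove_of_eq_comp_swap (hne : s1 ≠ s2) {a b : Fin (2 * k)}
    (h : s2.1 = s1.1 ∘ Equiv.swap a b) : TranspMove s1 s2 := by
  rw [transpMove_iff]
  cases ha : s1.1 a <;> cases hb : s1.1 b
  · exact absurd (Subtype.ext (h.trans (funext (apply_comp_swap_eq id (ha.trans hb.symm))))).symm hne
  · exact ⟨b, a, hb, ha, by rw [h, Equiv.swap_comm]⟩
  · exact ⟨a, b, ha, hb, h⟩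
  · exact absurd (Subtype.ext (h.trans (funext (apply_comp_swap_eq id (ha.trans hb.symm))))).symm hne

variable {m : ℕ} {x y : Fin m → MSym}

theorem transpMove_of_mem_swapPairs (hx : udList x = List.ofFn s1.1)
    (hy : udList y = List.ofFn s2.1) (hne : s1 ≠ s2) {p : Fin m × Fin m}
    (hp : p ∈ swapPairs x y) : TranspMove s1 s2 := by
  obtain ⟨e, he⟩ := exists_ofFn_eq_udPos hx
  obtain ⟨h₁, h₂, rfl⟩ : isUD (x p.1) ∧ isUD (x p.2) ∧ y = setTwo x p.1 p.2 (x p.2) (x p.1) := by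
    simpa [swapPairs] using hp
  obtain ⟨a, ha⟩ := (isUD_iff_mem_range he _).mp h₁
  obtain ⟨b, hb⟩ := (isUD_iff_mem_range he _).mp h₂
  rw [setTwo_eq_comp_swap, ← ha, ← hb, udList_comp_swap he] at hy
  exact transpMove_of_eq_comp_swap hne
    (List.ofFn_injective (hy.symm.trans (by rw [eq_of_udList_eq_ofFn he hx]; rfl)))

theorem exists_comp_swap_of_transpMove (hx : udList x = List.ofFn s1.1) (h : TranspMove s1 s2) :
    ∃ i j, x i = MSym.U ∧ x j = MSym.D ∧ udList (x ∘ Equiv.swap i j) = List.ofFn s2.1 := by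
  obtain ⟨a, b, ha, hb, hs2⟩ := transpMove_iff.mp h
  obtain ⟨e, he⟩ := exists_ofFn_eq_udPos hx
  have hs1 := eq_of_udList_eq_ofFn he hx
  have hbD : isUD (x (e b)) := (isUD_iff_mem_range he _).mpr ⟨b, rfl⟩
  refine ⟨e a, e b, by simpa [hs1] using ha, ?_, ?_⟩
  · simp only [hs1, decide_eq_false_iff_not] at hb
    exact hbD.resolve_left hb
  · rw [udList_comp_swap he, hs2, hs1]
    rfl

theorem isUD_iff_and_hiList_eq_of_mem_swapPairs {p : Fin m × Fin m} (hp : p ∈ swapPairs x y) :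
    (∀ t, isUD (y t) ↔ isUD (x t)) ∧ hiList y = hiList x := by
  obtain ⟨h₁, h₂, rfl⟩ : isUD (x p.1) ∧ isUD (x p.2) ∧ y = setTwo x p.1 p.2 (x p.2) (x p.1) := by
    simpa [swapPairs] using hp
  rw [setTwo_eq_comp_swap]
  refine ⟨fun t => Iff.of_eq (apply_comp_swap_eq isUD (propext (iff_of_true h₁ h₂)) t),
    hiList_congr (apply_comp_swap_eq MSym.hiBit ?_)⟩
  rw [MSym.hiBit_eq_none_of_isUD h₁, MSym.hiBit_eq_none_of_isUD h₂]

theorem swapPairs_comp_swap {i j : Fin m} (hi : isUD (x i)) (hj : isUD (x j)) (hij : x i ≠ x j) :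
    swapPairs x (x ∘ Equiv.swap i j) = {(i, j), (j, i)} := by
  ext ⟨a, b⟩
  simp only [swapPairs, setTwo_eq_comp_swap, Finset.mem_filter, Finset.mem_univ, true_and,
    Finset.mem_insert, Finset.mem_singleton, Prod.mk.injEq]
  constructor
  · rintro ⟨-, -, h⟩
    have hmoved (t : Fin m) (ht : t = i ∨ t = j) : t = a ∨ t = b := by
      by_contra hab
      simp only [not_or] at hab
      have := congrFun h t
      simp only [Function.comp_apply, Equiv.swap_apply_of_ne_of_ne hab.1 hab.2] at this
      rcases ht with rfl | rfl
      · exact hij (by simpa using this.symm)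
      · exact hij (by simpa using this)
    have hne : i ≠ j := fun h => hij (congrArg x h)
    rcases hmoved i (.inl rfl) with rfl | rfl <;> rcases hmoved j (.inr rfl) with rfl | rfl <;>
      simp_all
  · rintro (⟨rfl, rfl⟩ | ⟨rfl, rfl⟩)
    · exact ⟨hi, hj, rfl⟩
    · exact ⟨hj, hi, by rw [Equiv.swap_comm]⟩

end TranspositionMoves

theorem eq_of_mem_swapPairs {y' : Fin m → MSym} {p p' : Fin m × Fin m} (hp : p ∈ swapPairs x y)
    (hp' : p' ∈ swapPairs x y') (hud : udList y = udList y') : y = y' := by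
  obtain ⟨hmask, hhi⟩ := isUD_iff_and_hiList_eq_of_mem_swapPairs hp
  obtain ⟨hmask', hhi'⟩ := isUD_iff_and_hiList_eq_of_mem_swapPairs hp'
  exact eq_of_udList_eq_of_hiList_eq (fun t => (hmask t).trans (hmask' t).symm) hud
    (hhi.trans hhi'.symm)

section ProjectionChain

variable (α β : ℝ) {m k : ℕ} {q : Fin (m - 2 * k) → Bool} {s1 s2 : Dyck k}

theorem udList_ne_of_mem_Uset (hne : s1 ≠ s2) {x y : TkqType m k q} (hx : x ∈ Uset m k q s1)
    (hy : y ∈ Uset m k q s2) : udList x.1.1 ≠ udList y.1.1 := by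
  rw [mem_Uset.mp hx, mem_Uset.mp hy]
  exact fun h => hne (Subtype.ext (List.ofFn_injective h))

theorem transP_eq_card_swapPairs {x y : TkqType m k q} (hud : udList x.1.1 ≠ udList y.1.1) :
    transP α β m x.1 y.1 = #(swapPairs x.1.1 y.1.1) / (8 * m ^ 2) := by
  rw [transP, if_neg fun h => hud (by rw [h]),
    stepWeight_eq_card_swapPairs α β (x.2.1.trans y.2.1.symm) hud]

theorem transP_eq_zero_of_not_transpMove (hne : s1 ≠ s2) (hnt : ¬ TranspMove s1 s2)
    {x y : TkqType m k q} (hx : x ∈ Uset m k q s1) (hy : y ∈ Uset m k q s2) :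
    transP α β m x.1 y.1 = 0 := by
  rw [transP_eq_card_swapPairs α β (udList_ne_of_mem_Uset hne hx hy), Finset.card_eq_zero.mpr,
    Nat.cast_zero, zero_div]
  exact Finset.eq_empty_of_forall_notMem fun p hp =>
    hnt (transpMove_of_mem_swapPairs (mem_Uset.mp hx) (mem_Uset.mp hy) hne hp)

theorem exists_transP_eq_ite_of_transpMove (hne : s1 ≠ s2) (h : TranspMove s1 s2)
    {x : TkqType m k q} (hx : x ∈ Uset m k q s1) :
    ∃ y₀ ∈ Uset m k q s2, ∀ y ∈ Uset m k q s2,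
      transP α β m x.1 y.1 = if y = y₀ then 1 / (4 * (m : ℝ) ^ 2) else 0 := by
  obtain ⟨i, j, hi, hj, hud⟩ := exists_comp_swap_of_transpMove (mem_Uset.mp hx) h
  have hij : x.1.1 i ≠ x.1.1 j := by rw [hi, hj]; decide
  have hpairs := swapPairs_comp_swap (.inl hi) (.inr hj) hij
  have hmem : (i, j) ∈ swapPairs x.1.1 (x.1.1 ∘ Equiv.swap i j) := by simp [hpairs]
  obtain ⟨y₀, hy₀, hy₀x⟩ := exists_mem_Uset_val_eq hud
    ((isUD_iff_and_hiList_eq_of_mem_swapPairs hmem).2.trans x.2.2)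
  refine ⟨y₀, hy₀, fun y hy => ?_⟩
  rw [transP_eq_card_swapPairs α β (udList_ne_of_mem_Uset hne hx hy)]
  split_ifs with hyy₀
  · have hne' : (i, j) ≠ (j, i) := fun h => hij (by rw [(Prod.mk.inj h).1])
    rw [hyy₀, hy₀x, hpairs, Finset.card_pair hne']
    field_simp
    norm_num
  · rw [Finset.card_eq_zero.mpr, Nat.cast_zero, zero_div]
    refine Finset.eq_empty_of_forall_notMem fun p hp => hyy₀ (Subtype.ext (Subtype.ext ?_))
    rw [hy₀x]
    exact eq_of_mem_swapPairs hp hmem (by rw [← hy₀x, mem_Uset.mp hy, mem_Uset.mp hy₀])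

theorem projPkq_eq_of_sum_transP_eq (hne : s1 ≠ s2)
    (hπ : ∑ x ∈ Uset m k q s1, gibbsKQ α β m k q x ≠ 0) {c : ℝ}
    (hc : ∀ x ∈ Uset m k q s1, ∑ y ∈ Uset m k q s2, transP α β m x.1 y.1 = c) :
    projPkq α β m k q s1 s2 = c := by
  have hrow : ∀ x ∈ Uset m k q s1,
      ∑ y ∈ Uset m k q s2, gibbsKQ α β m k q x * restPkq α β m k q x y =
        gibbsKQ α β m k q x * c := by
    intro x hx
    rw [← Finset.mul_sum, ← hc x hx]
    refine congrArg _ (Finset.sum_congr rfl fun y hy => if_neg fun hxy => ?_)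
    exact udList_ne_of_mem_Uset hne hx hy (by rw [hxy])
  rw [projPkq, Finset.sum_congr rfl hrow, ← Finset.sum_mul]
  field_simp

end ProjectionChain

theorem motzkin_skeleton_projection_general (α β : ℝ) (m : ℕ) (k : ℕ)
    (hk : k ≤ m / 2) (q : Fin (m - 2 * k) → Bool) :
    (∀ s : Dyck k, (Uset m k q s).card = m.choose (2 * k)) ∧
    (∀ s1 s2 : Dyck k, s1 ≠ s2 → TranspMove s1 s2 →
      (∀ x ∈ Uset m k q s1,
        ∃! y : TkqType m k q, y ∈ Uset m k q s2 ∧ 0 < transP α β m x.1 y.1) ∧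
      projPkq α β m k q s1 s2 = 1 / (4 * (m : ℝ) ^ 2)) ∧
    (∀ s1 s2 : Dyck k, s1 ≠ s2 → ¬ TranspMove s1 s2 →
      projPkq α β m k q s1 s2 = 0) ∧
    (∀ s : Dyck k,
      ∑ x ∈ Uset m k q s, gibbsKQ α β m k q x = 1 / (Fintype.card (Dyck k) : ℝ)) := by
  have hk' : 2 * k ≤ m := by omega
  have hπ (s : Dyck k) : ∑ x ∈ Uset m k q s, gibbsKQ α β m k q x ≠ 0 := by
    rw [sum_gibbsKQ_Uset α β hk']
    have : 0 < Fintype.card (Dyck k) := Fintype.card_pos_iff.mpr ⟨s⟩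
    positivity
  refine ⟨card_Uset, fun s1 s2 hne ht => ⟨fun x hx => ?_, ?_⟩, fun s1 s2 hne hnt => ?_,
    sum_gibbsKQ_Uset α β hk'⟩
  · have hm : (0 : ℝ) < m := by
      obtain ⟨a, -⟩ := ht
      exact_mod_cast a.pos.trans_le hk'
    obtain ⟨y₀, hy₀, hP⟩ := exists_transP_eq_ite_of_transpMove α β hne ht hx
    refine ⟨y₀, ⟨hy₀, by rw [hP y₀ hy₀, if_pos rfl]; positivity⟩, fun y ⟨hy, hpos⟩ => ?_⟩
    by_contra hyy₀
    rw [hP y hy, if_neg hyy₀] at hpos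
    exact hpos.false
  · refine projPkq_eq_of_sum_transP_eq α β hne (hπ s1) fun x hx => ?_
    obtain ⟨y₀, hy₀, hP⟩ := exists_transP_eq_ite_of_transpMove α β hne ht hx
    rw [Finset.sum_congr rfl hP, Finset.sum_ite_eq', if_pos hy₀]
  · exact projPkq_eq_of_sum_transP_eq α β hne (hπ s1) fun x hx =>
      Finset.sum_eq_zero fun y hy => transP_eq_zero_of_not_transpMove α β hne hnt hx hy

/-- For all real `α, β`, every `m ≥ 2`, every
`0 ≤ k ≤ ⌊m/2⌋` and every `q ∈ {H,I}^{m-2k}`: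
(i) `|U_{k,q,s}| = binom(m, 2k)` for every `s ∈ 𝔇_k`;
(ii) whenever distinct `s₁, s₂ ∈ 𝔇_k` are related by a transposition move,
every `x ∈ U_{k,q,s₁}` has exactly one `y ∈ U_{k,q,s₂}` with `P(x,y) > 0`, and
the projection chain `M̄_{k,q}` satisfies `P̄_{k,q}(s₁,s₂) = 1/(4m²)`;
(iii) `P̄_{k,q}(s₁,s₂) = 0` for distinct `s₁, s₂` not related by a
transposition move, and the stationary distribution of `M̄_{k,q}` is uniform
on `𝔇_k`. -/
theorem motzkin_skeleton_projection (α β : ℝ) (m : ℕ) (hm : 2 ≤ m) (k : ℕ)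
    (hk : k ≤ m / 2) (q : Fin (m - 2 * k) → Bool) :
    (∀ s : Dyck k, (Uset m k q s).card = m.choose (2 * k)) ∧
    (∀ s1 s2 : Dyck k, s1 ≠ s2 → TranspMove s1 s2 →
      (∀ x ∈ Uset m k q s1,
        ∃! y : TkqType m k q, y ∈ Uset m k q s2 ∧ 0 < transP α β m x.1 y.1) ∧
      projPkq α β m k q s1 s2 = 1 / (4 * (m : ℝ) ^ 2)) ∧
    (∀ s1 s2 : Dyck k, s1 ≠ s2 → ¬ TranspMove s1 s2 →
      projPkq α β m k q s1 s2 = 0) ∧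
    (∀ s : Dyck k,
      ∑ x ∈ Uset m k q s, gibbsKQ α β m k q x = 1 / (Fintype.card (Dyck k) : ℝ)) :=
  motzkin_skeleton_projection_general α β m k hk q
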